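/- arXiv:2110.11345 — 3 statements merged into one kernel-verified Lean document; each statement's English description precedes it below -/
import Mathlib

section
/- For any graph G on n vertices and any vertex v of G, the square of the spectral radius of the adjacency matrix of G is at most the square of the spectral radius of G − v plus twice the degree of v; that is, ρ(G)² ≤ ρ(G−v)² + 2·d(v). -/
/-!
Let `x` be a unit eigenvector of `A = A(G)` for `ρ = ρ(G)`, so that `ρ² = ‖A x‖²`. Split `x` into
its value `a = x v` and its restriction `y` to `V ∖ {v}`, and let `c` be the column of `A` at `v`
restricted to `V ∖ {v}`, so `‖c‖² = d(v)`. Then `(A x)_v = ⟪c, y⟫` and `(A x)|_{V∖{v}} = B y + a c`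
with `B = A(G - v)`. Cauchy–Schwarz gives `(A x)_v² ≤ d(v) ‖y‖²`, and since `B` is a nonnegative
symmetric matrix, `‖B y‖ ≤ ρ(G - v) ‖y‖`, whence
`‖B y + a c‖² ≤ (ρ(G - v) ‖y‖ + |a| ‖c‖)² ≤ (ρ(G - v)² + d(v)) (‖y‖² + a²)`.
Adding up, `ρ² ≤ ρ(G - v)² + 2 d(v)`.
-/

open SimpleGraph

noncomputable def specRad {V : Type*} [Fintype V] [DecidableEq V] (G : SimpleGraph V) : ℝ :=
  letI := Classical.decRel G.Adj
  have h : (G.adjMatrix ℝ).IsHermitian := by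
    ext i j
    simp [Matrix.conjTranspose_apply, SimpleGraph.adjMatrix_apply, G.adj_comm i j]
  ⨆ i, h.eigenvalues i

open Matrix WithLp

namespace Matrix

variable {ι : Type*} [Fintype ι]

lemma dotProduct_sq_le (x y : ι → ℝ) : (x ⬝ᵥ y) ^ 2 ≤ (x ⬝ᵥ x) * (y ⬝ᵥ y) := by
  simpa only [dotProduct, sq] using Finset.sum_mul_sq_le_sq_mul_sq Finset.univ x y

/-- The bound `(‖w‖ + |a| ‖c‖)² ≤ (s² + ‖c‖²) (t + a²)`, i.e. Cauchy–Schwarz in `ℝ²`,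
for `‖w‖ ≤ s √t`. -/
lemma add_smul_dotProduct_add_smul_le {w c : ι → ℝ} {a s t : ℝ} (hw : w ⬝ᵥ w ≤ s ^ 2 * t)
    (ht : 0 ≤ t) : (w + a • c) ⬝ᵥ (w + a • c) ≤ (s ^ 2 + c ⬝ᵥ c) * (t + a ^ 2) := by
  have hc : 0 ≤ c ⬝ᵥ c := by simpa using dotProduct_self_star_nonneg c
  have hcross : 2 * a * (c ⬝ᵥ w) ≤ a ^ 2 * s ^ 2 + c ⬝ᵥ c * t := by
    refine le_of_sq_le_sq ?_ (by positivity)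
    nlinarith [mul_nonneg (sq_nonneg a) (sub_nonneg.2 (dotProduct_sq_le c w)),
      mul_nonneg (mul_nonneg (sq_nonneg a) hc) (sub_nonneg.2 hw),
      sq_nonneg (a ^ 2 * s ^ 2 - c ⬝ᵥ c * t)]
  simp only [add_dotProduct, dotProduct_add, smul_dotProduct, dotProduct_smul, smul_eq_mul,
    dotProduct_comm w c]
  nlinarith

lemma dotProduct_eq_mul_add_dotProduct_compl [DecidableEq ι] (f g : ι → ℝ) (i : ι) :
    f ⬝ᵥ g = f i * g i + (fun j : ({i}ᶜ : Set ι) => f j) ⬝ᵥ (fun j => g j) :=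
  Fintype.sum_eq_add_sum_subtype_ne _ i

end Matrix

namespace Matrix.IsHermitian

variable {n : Type*} [Fintype n] [DecidableEq n] {M : Matrix n n ℝ} (hM : M.IsHermitian)
include hM

lemma dotProduct_eq_sum_eigenvectorBasis_repr (z w : n → ℝ) :
    z ⬝ᵥ w =
      ∑ i, hM.eigenvectorBasis.repr (toLp 2 z) i * hM.eigenvectorBasis.repr (toLp 2 w) i := by
  have := hM.eigenvectorBasis.repr.inner_map_map (toLp 2 w) (toLp 2 z)
  simp only [PiLp.inner_apply] at this
  simpa [dotProduct, mul_comm] using this.symm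

lemma eigenvectorBasis_repr_mulVec (z : n → ℝ) (i : n) :
    hM.eigenvectorBasis.repr (toLp 2 (M *ᵥ z)) i =
      hM.eigenvalues i * hM.eigenvectorBasis.repr (toLp 2 z) i := by
  simp only [OrthonormalBasis.repr_apply_apply, EuclideanSpace.inner_eq_star_dotProduct,
    star_trivial]
  rw [dotProduct_comm, dotProduct_mulVec, ← mulVec_transpose, (isHermitian_iff_isSymm.mp hM).eq,
    mulVec_eigenvectorBasis, smul_dotProduct, smul_eq_mul, dotProduct_comm]

lemma eigenvectorBasis_dotProduct_self (i : n) :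
    ofLp (hM.eigenvectorBasis i) ⬝ᵥ ofLp (hM.eigenvectorBasis i) = 1 := by
  have := real_inner_self_eq_norm_sq (hM.eigenvectorBasis i)
  rw [hM.eigenvectorBasis.orthonormal.1 i, EuclideanSpace.inner_eq_star_dotProduct] at this
  simpa using this

lemma dotProduct_mulVec_le_iSup_eigenvalues_mul (z : n → ℝ) :
    z ⬝ᵥ (M *ᵥ z) ≤ (⨆ i, hM.eigenvalues i) * (z ⬝ᵥ z) := by
  simp only [hM.dotProduct_eq_sum_eigenvectorBasis_repr z, hM.eigenvectorBasis_repr_mulVec,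
    Finset.mul_sum]
  refine Finset.sum_le_sum fun i _ => ?_
  have := le_ciSup (Set.finite_range hM.eigenvalues).bddAbove i
  nlinarith [mul_self_nonneg (hM.eigenvectorBasis.repr (toLp 2 z) i)]

lemma mulVec_dotProduct_mulVec_le_sq_mul {r : ℝ} (hr : ∀ i, |hM.eigenvalues i| ≤ r)
    (z : n → ℝ) : (M *ᵥ z) ⬝ᵥ (M *ᵥ z) ≤ r ^ 2 * (z ⬝ᵥ z) := by
  simp only [hM.dotProduct_eq_sum_eigenvectorBasis_repr, hM.eigenvectorBasis_repr_mulVec,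
    Finset.mul_sum]
  refine Finset.sum_le_sum fun i _ => ?_
  have : hM.eigenvalues i ^ 2 ≤ r ^ 2 := sq_le_sq' (abs_le.mp (hr i)).1 (abs_le.mp (hr i)).2
  nlinarith [mul_self_nonneg (hM.eigenvectorBasis.repr (toLp 2 z) i)]

lemma exists_mulVec_eq_iSup_eigenvalues_smul [Nonempty n] :
    ∃ x : n → ℝ, x ⬝ᵥ x = 1 ∧ M *ᵥ x = (⨆ i, hM.eigenvalues i) • x := by
  obtain ⟨i, hi⟩ := Finite.exists_max hM.eigenvalues
  refine ⟨hM.eigenvectorBasis i, hM.eigenvectorBasis_dotProduct_self i, ?_⟩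
  rw [mulVec_eigenvectorBasis,
    le_antisymm (ciSup_le hi) (le_ciSup (Set.finite_range _).bddAbove i)]

/-- The Perron–Frobenius bound: for a unit eigenvector `x`, `|λ| = |⟪x, M x⟫| ≤ ⟪|x|, M |x|⟫`
because `M` is entrywise nonnegative. -/
lemma abs_eigenvalues_le_iSup_eigenvalues (hM₀ : ∀ i j, 0 ≤ M i j) (i : n) :
    |hM.eigenvalues i| ≤ ⨆ j, hM.eigenvalues j := by
  set x : n → ℝ := ofLp (hM.eigenvectorBasis i)
  have hx : x ⬝ᵥ x = 1 := hM.eigenvectorBasis_dotProduct_self i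
  have hx_abs : |x| ⬝ᵥ |x| = 1 := by simpa [dotProduct, abs_mul_abs_self] using hx
  have hquad : hM.eigenvalues i = x ⬝ᵥ (M *ᵥ x) := by
    rw [mulVec_eigenvectorBasis, dotProduct_smul, hx, smul_eq_mul, mul_one]
  calc |hM.eigenvalues i| ≤ |x| ⬝ᵥ (M *ᵥ |x|) := by
        rw [hquad]
        simp only [dotProduct, mulVec, Finset.mul_sum]
        refine (Finset.abs_sum_le_sum_abs _ _).trans (Finset.sum_le_sum fun u _ => ?_)
        refine (Finset.abs_sum_le_sum_abs _ _).trans_eq (Finset.sum_congr rfl fun w _ => ?_)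
        simp [abs_mul, abs_of_nonneg (hM₀ u w)]
    _ ≤ (⨆ j, hM.eigenvalues j) * (|x| ⬝ᵥ |x|) :=
        hM.dotProduct_mulVec_le_iSup_eigenvalues_mul _
    _ = ⨆ j, hM.eigenvalues j := by rw [hx_abs, mul_one]

end Matrix.IsHermitian

namespace SimpleGraph

variable {V : Type*} [Fintype V] [DecidableEq V] (G : SimpleGraph V) [DecidableRel G.Adj]

theorem specRad_eq_iSup_eigenvalues :
    specRad G = ⨆ i, (G.isHermitian_adjMatrix ℝ).eigenvalues i := by
  obtain rfl : Classical.decRel G.Adj = ‹_› := Subsingleton.elim _ _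
  rfl

theorem adjMatrix_mulVec_dotProduct_le_specRad_sq_mul (z : V → ℝ) :
    (G.adjMatrix ℝ *ᵥ z) ⬝ᵥ (G.adjMatrix ℝ *ᵥ z) ≤ specRad G ^ 2 * (z ⬝ᵥ z) := by
  refine (G.isHermitian_adjMatrix ℝ).mulVec_dotProduct_mulVec_le_sq_mul (fun i => ?_) z
  rw [specRad_eq_iSup_eigenvalues]
  exact (G.isHermitian_adjMatrix ℝ).abs_eigenvalues_le_iSup_eigenvalues
    (fun _ _ => by rw [adjMatrix_apply]; positivity) i

theorem adjMatrix_mulVec_dotProduct_le_induce_compl (v : V) (x : V → ℝ) :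
    (G.adjMatrix ℝ *ᵥ x) ⬝ᵥ (G.adjMatrix ℝ *ᵥ x) ≤
      (specRad (G.induce ({v}ᶜ : Set V)) ^ 2 + 2 * G.degree v) * (x ⬝ᵥ x) := by
  set B := (G.induce ({v}ᶜ : Set V)).adjMatrix ℝ
  set y : ({v}ᶜ : Set V) → ℝ := fun u => x u
  set c : ({v}ᶜ : Set V) → ℝ := fun u => G.adjMatrix ℝ u v
  have hsymm : ∀ u w, G.adjMatrix ℝ u w = G.adjMatrix ℝ w u :=
    fun u w => G.isSymm_adjMatrix.apply w u
  have hvv : G.adjMatrix ℝ v v = 0 := by simp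
  have hc : c ⬝ᵥ c = G.degree v := by
    rw [← G.adjMatrix_mul_self_apply_self v, mul_apply',
      dotProduct_eq_mul_add_dotProduct_compl _ _ v]
    simp only [hvv, mul_zero, zero_add, c, hsymm v]
  have hAx_v : (G.adjMatrix ℝ *ᵥ x) v = c ⬝ᵥ y := by
    rw [mulVec, dotProduct_eq_mul_add_dotProduct_compl _ _ v, hvv, zero_mul, zero_add]
    simp only [c, y, hsymm v]
  have hAx_compl :
      (fun u : ({v}ᶜ : Set V) => (G.adjMatrix ℝ *ᵥ x) u) = B *ᵥ y + x v • c := by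
    ext u
    rw [mulVec, dotProduct_eq_mul_add_dotProduct_compl _ _ v]
    simp only [Pi.add_apply, Pi.smul_apply, mulVec, dotProduct, B, c, y, smul_eq_mul,
      adjMatrix_apply, induce_adj]
    ring
  have hAx_v_sq : (c ⬝ᵥ y) ^ 2 ≤ G.degree v * (y ⬝ᵥ y) := hc ▸ dotProduct_sq_le c y
  have hAx_compl_sq := add_smul_dotProduct_add_smul_le (a := x v) (c := c)
    ((G.induce ({v}ᶜ : Set V)).adjMatrix_mulVec_dotProduct_le_specRad_sq_mul y)
    (by simpa using dotProduct_self_star_nonneg y)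
  rw [hc] at hAx_compl_sq
  rw [dotProduct_eq_mul_add_dotProduct_compl _ _ v, hAx_compl, hAx_v,
    dotProduct_eq_mul_add_dotProduct_compl x x v]
  nlinarith [mul_nonneg (Nat.cast_nonneg (α := ℝ) (G.degree v)) (sq_nonneg (x v))]

end SimpleGraph

/-- For any graph `G` and vertex `v`, `ρ(G)² ≤ ρ(G−v)² + 2·d(v)`. -/
theorem stmt0 {V : Type*} [Fintype V] [DecidableEq V] (G : SimpleGraph V)
    [DecidableRel G.Adj] (v : V) :
    specRad G ^ 2 ≤ specRad (G.induce ({v}ᶜ : Set V)) ^ 2 + 2 * (G.degree v : ℝ) := by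
  have : Nonempty V := ⟨v⟩
  obtain ⟨x, hx, hAx⟩ := (G.isHermitian_adjMatrix ℝ).exists_mulVec_eq_iSup_eigenvalues_smul
  have h := G.adjMatrix_mulVec_dotProduct_le_induce_compl v x
  rw [hAx, ← specRad_eq_iSup_eigenvalues, smul_dotProduct, dotProduct_smul, hx] at h
  simpa [sq] using h
end

section
/- Let H be a bipartite graph with parts V₁ and V₂ such that any two vertices in the same part have at least k common neighbors, and δ(H) ≥ 2k+2. Then for every v₁ ∈ V₁, v₂ ∈ V₂, and every integer l with 2 ≤ l ≤ k, there exists a path in H from v₁ to v₂ with exactly 2l vertices. -/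
open SimpleGraph

/-- In a bipartite graph where any two same-part vertices have at least `k` common
neighbors and `δ(H) ≥ 2k+2`, any two vertices in different parts are joined by a path
of exactly `2l` vertices for every `2 ≤ l ≤ k`. -/
theorem stmt9 {V : Type*} [Fintype V] [DecidableEq V] (H : SimpleGraph V)
    [DecidableRel H.Adj] (V₁ V₂ : Set V) (hpart : ∀ v, v ∈ V₁ ↔ v ∉ V₂)
    (hbip : ∀ u v, H.Adj u v → (u ∈ V₁ ∧ v ∈ V₂) ∨ (u ∈ V₂ ∧ v ∈ V₁))
    (k : ℕ) (hk : 2 ≤ k)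
    (hcommon : ∀ u v : V, ((u ∈ V₁ ∧ v ∈ V₁) ∨ (u ∈ V₂ ∧ v ∈ V₂)) →
      k ≤ (H.neighborSet u ∩ H.neighborSet v).ncard)
    (hδ : 2 * k + 2 ≤ H.minDegree) :
    ∀ v₁ ∈ V₁, ∀ v₂ ∈ V₂, ∀ l : ℕ, 2 ≤ l → l ≤ k →
      ∃ p : H.Walk v₁ v₂, p.IsPath ∧ p.length + 1 = 2 * l := by
  intro v₁ hv₁ v₂ hv₂
  have hdisj : ∀ v, v ∈ V₁ → v ∈ V₂ → False := fun v h1 h2 => (hpart v).mp h1 h2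
  have hnbr1 : ∀ u w, u ∈ V₁ → H.Adj u w → w ∈ V₂ := by
    intro u w hu hadj
    rcases hbip u w hadj with ⟨_, hw⟩ | ⟨hu2, _⟩
    · exact hw
    · exact absurd hu2 ((hpart u).mp hu)
  have hnbr2 : ∀ u w, u ∈ V₂ → H.Adj u w → w ∈ V₁ := by
    intro u w hu hadj
    rcases hbip u w hadj with ⟨hu1, _⟩ | ⟨_, hw⟩
    · exact absurd hu ((hpart u).mp hu1)
    · exact hw
  have hdeg : ∀ v : V, 2 * k + 2 ≤ (H.neighborFinset v).card := by
    intro v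
    rw [H.card_neighborFinset_eq_degree v]
    exact le_trans hδ (H.minDegree_le_degree v)
  have hcom : ∀ u x : V, u ∈ V₁ → x ∈ V₁ →
      k ≤ (H.neighborFinset u ∩ H.neighborFinset x).card := by
    intro u x hu hx
    have h1 := hcommon u x (Or.inl ⟨hu, hx⟩)
    have h2 : (H.neighborSet u ∩ H.neighborSet x)
        = ↑(H.neighborFinset u ∩ H.neighborFinset x) := by
      ext w; simp
    rwa [h2, Set.ncard_coe_finset] at h1
  have hpick : ∀ (A B : Finset V), B.card < A.card → ∃ x ∈ A, x ∉ B := by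
    intro A B hAB
    have h1 : B.card + (A \ B).card ≥ A.card := by
      have := Finset.card_le_card_sdiff_add_card (s := A) (t := B)
      omega
    have h2 : (A \ B).Nonempty := by
      rw [← Finset.card_pos]; omega
    obtain ⟨x, hx⟩ := h2
    rw [Finset.mem_sdiff] at hx
    exact ⟨x, hx.1, hx.2⟩
  have key : ∀ l, 2 ≤ l → l ≤ k → ∀ u, u ∈ V₁ → ∀ S₁ S₂ : Finset V,
      ↑S₁ ⊆ V₁ → ↑S₂ ⊆ V₂ → S₁.card + l ≤ k → S₂.card + l ≤ k → u ∉ S₁ → v₂ ∉ S₂ →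
      ∃ p : H.Walk u v₂, p.IsPath ∧ p.length + 1 = 2 * l ∧
        ∀ w ∈ p.support, w ∉ S₁ ∧ w ∉ S₂ := by
    intro l hl2
    induction l, hl2 using Nat.le_induction with
    | base =>
      intro hlk u hu S₁ S₂ hS₁ hS₂ hc₁ hc₂ huS hv₂S
      -- pick x : a neighbor of v₂ avoiding S₁ ∪ {u}
      obtain ⟨x, hxN, hxB⟩ : ∃ x ∈ H.neighborFinset v₂, x ∉ S₁ ∪ {u} := by
        apply hpick
        have := Finset.card_union_le S₁ {u}
        have := hdeg v₂
        simp only [Finset.card_singleton] at *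
        omega
      rw [mem_neighborFinset] at hxN
      have hxV₁ : x ∈ V₁ := hnbr2 v₂ x hv₂ hxN
      rw [Finset.mem_union, Finset.mem_singleton] at hxB
      push_neg at hxB
      -- pick y : common neighbor of u and x avoiding S₂ ∪ {v₂}
      obtain ⟨y, hyN, hyB⟩ :
          ∃ y ∈ H.neighborFinset u ∩ H.neighborFinset x, y ∉ S₂ ∪ {v₂} := by
        apply hpick
        have := Finset.card_union_le S₂ ({v₂} : Finset V)
        have := hcom u x hu hxV₁
        simp only [Finset.card_singleton] at *
        omega
      rw [Finset.mem_inter, mem_neighborFinset, mem_neighborFinset] at hyN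
      obtain ⟨huy, hxy⟩ := hyN
      rw [Finset.mem_union, Finset.mem_singleton] at hyB
      push_neg at hyB
      have hyV₂ : y ∈ V₂ := hnbr1 u y hu huy
      refine ⟨Walk.cons huy (Walk.cons hxy.symm (Walk.cons hxN.symm Walk.nil)), ?_, ?_, ?_⟩
      · rw [Walk.isPath_def]
        simp only [Walk.support_cons, Walk.support_nil, List.nodup_cons, List.mem_cons,
          List.mem_singleton, List.not_mem_nil, or_false, List.nodup_nil, and_true]
        refine ⟨?_, ?_, ?_⟩
        · push_neg
          exact ⟨huy.ne, fun h => hxB.2 h.symm, fun h => hdisj v₂ (h ▸ hu) hv₂⟩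
        · push_neg
          exact ⟨hxy.ne.symm, hyB.2⟩
        · exact ⟨hxN.ne.symm, not_false⟩
      · simp
      · intro w hw
        simp only [Walk.support_cons, Walk.support_nil, List.mem_cons,
          List.mem_singleton, List.not_mem_nil, or_false] at hw
        rcases hw with rfl | rfl | rfl | rfl
        · exact ⟨huS, fun h => hdisj w hu (hS₂ h)⟩
        · exact ⟨fun h => hdisj w (hS₁ h) hyV₂, hyB.1⟩
        · exact ⟨hxB.1, fun h => hdisj w hxV₁ (hS₂ h)⟩
        · exact ⟨fun h => hdisj w (hS₁ h) hv₂, hv₂S⟩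
    | succ l hl ih =>
      intro hlk u hu S₁ S₂ hS₁ hS₂ hc₁ hc₂ huS hv₂S
      -- pick x : a neighbor of v₂ avoiding S₁ ∪ {u}
      obtain ⟨x, hxN, hxB⟩ : ∃ x ∈ H.neighborFinset v₂, x ∉ S₁ ∪ {u} := by
        apply hpick
        have := Finset.card_union_le S₁ {u}
        have := hdeg v₂
        simp only [Finset.card_singleton] at *
        omega
      rw [mem_neighborFinset] at hxN
      have hxV₁ : x ∈ V₁ := hnbr2 v₂ x hv₂ hxN
      rw [Finset.mem_union, Finset.mem_singleton] at hxB
      push_neg at hxB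
      -- pick y : common neighbor of u and x avoiding S₂ ∪ {v₂}
      obtain ⟨y, hyN, hyB⟩ :
          ∃ y ∈ H.neighborFinset u ∩ H.neighborFinset x, y ∉ S₂ ∪ {v₂} := by
        apply hpick
        have := Finset.card_union_le S₂ ({v₂} : Finset V)
        have := hcom u x hu hxV₁
        simp only [Finset.card_singleton] at *
        omega
      rw [Finset.mem_inter, mem_neighborFinset, mem_neighborFinset] at hyN
      obtain ⟨huy, hxy⟩ := hyN
      rw [Finset.mem_union, Finset.mem_singleton] at hyB
      push_neg at hyB
      have hyV₂ : y ∈ V₂ := hnbr1 u y hu huy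
      -- recursive path from x
      obtain ⟨p, hp, hplen, hpsup⟩ := ih (le_trans (Nat.le_succ l) hlk) x hxV₁
        (S₁ ∪ {u}) (S₂ ∪ {y})
        (by
          intro w hw
          rw [Finset.coe_union, Set.mem_union] at hw
          rcases hw with hw | hw
          · exact hS₁ hw
          · simp only [Finset.coe_singleton, Set.mem_singleton_iff] at hw
            exact hw ▸ hu)
        (by
          intro w hw
          rw [Finset.coe_union, Set.mem_union] at hw
          rcases hw with hw | hw
          · exact hS₂ hw
          · simp only [Finset.coe_singleton, Set.mem_singleton_iff] at hw
            exact hw ▸ hyV₂)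
        (by
          have := Finset.card_union_le S₁ ({u} : Finset V)
          simp only [Finset.card_singleton] at this
          omega)
        (by
          have := Finset.card_union_le S₂ ({y} : Finset V)
          simp only [Finset.card_singleton] at this
          omega)
        (by
          rw [Finset.mem_union, Finset.mem_singleton]
          push_neg
          exact ⟨hxB.1, hxB.2⟩)
        (by
          rw [Finset.mem_union, Finset.mem_singleton]
          push_neg
          exact ⟨hv₂S, fun h => hyB.2 h.symm⟩)
      have hunp : u ∉ p.support := fun h =>
        (hpsup u h).1 (Finset.mem_union_right _ (Finset.mem_singleton_self u))
      have hynp : y ∉ p.support := fun h =>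
        (hpsup y h).2 (Finset.mem_union_right _ (Finset.mem_singleton_self y))
      refine ⟨Walk.cons huy (Walk.cons hxy.symm p), ?_, ?_, ?_⟩
      · rw [Walk.isPath_def]
        simp only [Walk.support_cons, List.nodup_cons, List.mem_cons]
        refine ⟨?_, ?_, ?_⟩
        · push_neg
          exact ⟨huy.ne, hunp⟩
        · exact hynp
        · exact (Walk.isPath_def _).mp hp
      · simp only [Walk.length_cons]
        omega
      · intro w hw
        simp only [Walk.support_cons, List.mem_cons] at hw
        rcases hw with rfl | rfl | hw
        · exact ⟨huS, fun h => hdisj w hu (hS₂ h)⟩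
        · exact ⟨fun h => hdisj w (hS₁ h) hyV₂, hyB.1⟩
        · have := hpsup w hw
          rw [Finset.mem_union, Finset.mem_union] at this
          push_neg at this
          exact ⟨this.1.1, this.2.1⟩
  intro l hl2 hlk
  obtain ⟨p, hp, hlen, -⟩ := key l hl2 hlk v₁ hv₁ ∅ ∅ (by simp) (by simp)
    (by simpa using hlk) (by simpa using hlk) (by simp) (by simp)
  exact ⟨p, hp, hlen⟩
end

section
/- The graph K_{⌈(n−2)/2⌉,⌊(n−2)/2⌋} • K₃ is non-bipartite and contains no cycle of length 2k+1 for any k ≥ 2; its only odd cycles are triangles. -/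
open SimpleGraph

/-- `K_{a,b} • K₃`: the complete bipartite graph `K_{a,b}` with a triangle glued at a
vertex of the part of size `b` (the part `Fin b`), using two new vertices `Fin 2`. -/
def KdotK3 (a b : ℕ) (hb : 0 < b) : SimpleGraph ((Fin a ⊕ Fin b) ⊕ Fin 2) :=
  SimpleGraph.fromRel (fun x y =>
    (∃ i j, x = Sum.inl (Sum.inl i) ∧ y = Sum.inl (Sum.inr j)) ∨
    (x = Sum.inl (Sum.inr ⟨0, hb⟩) ∧ y = Sum.inr 0) ∨
    (x = Sum.inl (Sum.inr ⟨0, hb⟩) ∧ y = Sum.inr 1) ∨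
    (x = Sum.inr 0 ∧ y = Sum.inr 1))

/-! Deleting the edge `xy` of the pendant triangle `wxy` leaves a bipartite graph (the tips `x`, `y`
join the side `Fin a`), so every odd cycle uses `xy`. Since `x` and `y` have no neighbours besides
each other and `w`, a cycle through `x` can only be the triangle itself. -/

namespace SimpleGraph

variable {V : Type*} {G : SimpleGraph V}

theorem Walk.mem_edges_of_odd_length {e : Sym2 V} (h : (G.deleteEdges {e}).Colorable 2)
    {u : V} (c : G.Walk u u) (hc : Odd c.length) : e ∈ c.edges := by
  by_contra he
  have := two_colorable_iff_forall_loop_even.mp h u (c.toDeleteEdge e he)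
  rw [Walk.length_transfer] at this
  exact Nat.not_even_iff_odd.mpr hc this

section PendantTriangle

variable {w x y : V}

theorem Walk.IsPath.length_eq_one_of_not_mem_support (hy : ∀ u, G.Adj y u → u = w ∨ u = x)
    (hwy : w ≠ y) {p : G.Walk y w} (hp : p.IsPath) (hxp : x ∉ p.support) : p.length = 1 := by
  cases p with
  | nil => exact absurd rfl hwy
  | cons h q =>
    rcases hy _ h with rfl | rfl
    · rw [Walk.length_cons, Walk.length_eq_zero_iff.mpr (Walk.isPath_iff_nil.mp hp.of_cons)]
    · simp at hxp

theorem Walk.IsPath.length_eq_two_of_adj (hx : ∀ u, G.Adj x u → u = w ∨ u = y)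
    (hy : ∀ u, G.Adj y u → u = w ∨ u = x) (hwy : w ≠ y) {v : V} {p : G.Walk x v}
    (hp : p.IsPath) (hxv : G.Adj x v) (he : s(x, v) ∉ p.edges) : p.length = 2 := by
  cases p with
  | nil => exact (hxv.ne rfl).elim
  | cons h q =>
    have hxq : x ∉ q.support := (Walk.cons_isPath_iff h q).mp hp |>.2
    rcases hx _ h with rfl | rfl <;> rcases hx _ hxv with rfl | rfl
    · simp [Walk.eq_nil_iff_nil.mpr (Walk.isPath_iff_nil.mp hp.of_cons)] at he
    · rw [Walk.length_cons, ← Walk.length_reverse,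
        hp.of_cons.reverse.length_eq_one_of_not_mem_support hy hwy (by simpa using hxq)]
    · rw [Walk.length_cons, hp.of_cons.length_eq_one_of_not_mem_support hy hwy hxq]
    · simp [Walk.eq_nil_iff_nil.mpr (Walk.isPath_iff_nil.mp hp.of_cons)] at he

theorem Walk.IsCycle.length_eq_three_of_mem_support (hx : ∀ u, G.Adj x u → u = w ∨ u = y)
    (hy : ∀ u, G.Adj y u → u = w ∨ u = x) (hwy : w ≠ y) {v : V} {c : G.Walk v v}
    (hc : c.IsCycle) (hxc : x ∈ c.support) : c.length = 3 := by
  classical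
  rw [← Walk.length_rotate c x hxc]
  cases hr : c.rotate x hxc with
  | nil => exact absurd (hr ▸ hc.rotate hxc) Walk.not_isCycle_nil
  | cons h p =>
    obtain ⟨hp, he⟩ := Walk.cons_isCycle_iff p h |>.mp (hr ▸ hc.rotate hxc)
    rw [Walk.length_cons, ← Walk.length_reverse,
      hp.reverse.length_eq_two_of_adj hx hy hwy h (by simpa using he)]

end PendantTriangle

end SimpleGraph

section KdotK3

variable {a b : ℕ} {hb : 0 < b}

theorem KdotK3_adj_inr_zero {u : (Fin a ⊕ Fin b) ⊕ Fin 2}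
    (h : (KdotK3 a b hb).Adj (Sum.inr 0) u) : u = Sum.inl (Sum.inr ⟨0, hb⟩) ∨ u = Sum.inr 1 := by
  simp only [KdotK3, fromRel_adj] at h
  grind

theorem KdotK3_adj_inr_one {u : (Fin a ⊕ Fin b) ⊕ Fin 2}
    (h : (KdotK3 a b hb).Adj (Sum.inr 1) u) : u = Sum.inl (Sum.inr ⟨0, hb⟩) ∨ u = Sum.inr 0 := by
  simp only [KdotK3, fromRel_adj] at h
  grind

theorem KdotK3_isNClique_triangle :
    (KdotK3 a b hb).IsNClique 3 {Sum.inl (Sum.inr ⟨0, hb⟩), Sum.inr 0, Sum.inr 1} :=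
  is3Clique_triple_iff.mpr ⟨by simp [KdotK3], by simp [KdotK3], by simp [KdotK3]⟩

theorem KdotK3_deleteEdges_colorable_two :
    ((KdotK3 a b hb).deleteEdges {s(Sum.inr 0, Sum.inr 1)}).Colorable 2 :=
  ⟨Coloring.mk (Sum.elim (Sum.elim (fun _ ↦ 0) (fun _ ↦ 1)) (fun _ ↦ 0)) (by simp [KdotK3])⟩

theorem KdotK3_length_eq_three_of_isCycle_of_odd {v : (Fin a ⊕ Fin b) ⊕ Fin 2}
    {c : (KdotK3 a b hb).Walk v v} (hc : c.IsCycle) (hodd : Odd c.length) : c.length = 3 :=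
  hc.length_eq_three_of_mem_support (fun _ ↦ KdotK3_adj_inr_zero) (fun _ ↦ KdotK3_adj_inr_one)
    Sum.inl_ne_inr <| c.fst_mem_support_of_mem_edges <|
      c.mem_edges_of_odd_length KdotK3_deleteEdges_colorable_two hodd

end KdotK3

/-- `K_{a,b} • K₃` is non-bipartite, contains no cycle of length `2k+1` for any `k ≥ 2`,
and its only odd cycles are triangles. -/
theorem stmt15 (a b : ℕ) (hb : 0 < b) :
    ¬ (KdotK3 a b hb).Colorable 2 ∧
    (∀ k : ℕ, 2 ≤ k →
      ¬ ∃ (v : (Fin a ⊕ Fin b) ⊕ Fin 2) (c : (KdotK3 a b hb).Walk v v),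
          c.IsCycle ∧ c.length = 2 * k + 1) ∧
    (∀ (v : (Fin a ⊕ Fin b) ⊕ Fin 2) (c : (KdotK3 a b hb).Walk v v),
      c.IsCycle → Odd c.length → c.length = 3) := by
  refine ⟨fun h ↦ KdotK3_isNClique_triangle.not_cliqueFree (h.cliqueFree (by norm_num)), ?_,
    fun _ _ ↦ KdotK3_length_eq_three_of_isCycle_of_odd⟩
  rintro k hk ⟨v, c, hc, hlen⟩
  have := KdotK3_length_eq_three_of_isCycle_of_odd hc ⟨k, hlen⟩
  omega
end
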